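/- arXiv:2303.06952 — 2 statements merged into one kernel-verified Lean document; each statement's English description precedes it below -/
import Mathlib

section
/- In a category C equipped with a left pre-summability structure (D, π₀, π₁, σ): one has π₁ ⊞ π₀ with sum π₁ + π₀ = σ (axiom (D-com)) if and only if for all f₀, f₁ ∈ C(X, Y), f₀ ⊞ f₁ implies f₁ ⊞ f₀ and f₀ + f₁ = f₁ + f₀. -/
open CategoryTheory CategoryTheory.Limits
open scoped Classical

universe v u

/-- A summable pairing structure on a category `C` whose hom-sets carry a
distinguished morphism `0` satisfying `0 ∘ f = 0`. -/
structure SummablePairing (C : Type u) [Category.{v} C] where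
  /-- the distinguished zero morphism of each hom-set -/
  zero : ∀ X Y : C, X ⟶ Y
  /-- `0 ∘ f = 0` -/
  comp_zero : ∀ {X Y Z : C} (f : X ⟶ Y), f ≫ zero Y Z = zero X Z
  /-- the map on objects -/
  D : C → C
  p0 : ∀ X : C, D X ⟶ X
  p1 : ∀ X : C, D X ⟶ X
  s : ∀ X : C, D X ⟶ X
  /-- `p0` and `p1` are jointly monic -/
  jointly_monic : ∀ {Y X : C} {f g : Y ⟶ D X},
    f ≫ p0 X = g ≫ p0 X → f ≫ p1 X = g ≫ p1 X → f = g

namespace SummablePairing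

variable {C : Type u} [Category.{v} C]

/-- `f0 ⊞ f1` : summability of two parallel morphisms. -/
def Summable (S : SummablePairing C) {X Y : C} (f0 f1 : X ⟶ Y) : Prop :=
  ∃ w : X ⟶ S.D Y, w ≫ S.p0 Y = f0 ∧ w ≫ S.p1 Y = f1

/-- the witness `⟨f0, f1⟩` of a summable pair (an arbitrary default otherwise) -/
noncomputable def wit (S : SummablePairing C) {X Y : C} (f0 f1 : X ⟶ Y) : X ⟶ S.D Y :=
  if h : S.Summable f0 f1 then h.choose else S.zero X (S.D Y)

/-- the sum `f0 + f1` of a summable pair -/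
noncomputable def add (S : SummablePairing C) {X Y : C} (f0 f1 : X ⟶ Y) : X ⟶ Y :=
  S.wit f0 f1 ≫ S.s Y

/-- additive morphisms -/
def Additive (S : SummablePairing C) {Y Z : C} (h : Y ⟶ Z) : Prop :=
  (∀ X : C, S.zero X Y ≫ h = S.zero X Z) ∧
  (∀ (X : C) (f0 f1 : X ⟶ Y), S.Summable f0 f1 →
    S.Summable (f0 ≫ h) (f1 ≫ h) ∧ S.add f0 f1 ≫ h = S.add (f0 ≫ h) (f1 ≫ h))

/-- a left pre-summability structure: `p0`, `p1` and `s` are additive -/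
def IsLeftPreSummability (S : SummablePairing C) : Prop :=
  (∀ X : C, S.Additive (S.p0 X)) ∧ (∀ X : C, S.Additive (S.p1 X)) ∧
  (∀ X : C, S.Additive (S.s X))

/-- axiom (D-com) -/
def Dcom (S : SummablePairing C) : Prop :=
  ∀ X : C, S.Summable (S.p1 X) (S.p0 X) ∧ S.add (S.p1 X) (S.p0 X) = S.s X

/-- axiom (D-zero) -/
def Dzero (S : SummablePairing C) : Prop :=
  ∀ X : C, S.Summable (𝟙 X) (S.zero X X) ∧ S.Summable (S.zero X X) (𝟙 X) ∧
    S.add (𝟙 X) (S.zero X X) = 𝟙 X ∧ S.add (S.zero X X) (𝟙 X) = 𝟙 X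

/-- axiom (D-witness) -/
def Dwitness (S : SummablePairing C) : Prop :=
  ∀ (Y X : C) (f g : Y ⟶ S.D X),
    S.Summable (f ≫ S.s X) (g ≫ S.s X) → S.Summable f g

/-- a left summability structure -/
def IsLeftSummability (S : SummablePairing C) : Prop :=
  S.IsLeftPreSummability ∧ S.Dcom ∧ S.Dzero ∧ S.Dwitness

/-- `ι₀ = ⟨id, 0⟩` -/
noncomputable def iota0 (S : SummablePairing C) (X : C) : X ⟶ S.D X :=
  S.wit (𝟙 X) (S.zero X X)

/-- `θ = ⟨π₀ ∘ π₀, π₁ ∘ π₀ + π₀ ∘ π₁⟩` -/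
noncomputable def theta (S : SummablePairing C) (X : C) : S.D (S.D X) ⟶ S.D X :=
  S.wit (S.p0 (S.D X) ≫ S.p0 X)
    (S.add (S.p0 (S.D X) ≫ S.p1 X) (S.p1 (S.D X) ≫ S.p0 X))

/-- `l = ⟨⟨π₀, 0⟩, ⟨0, π₁⟩⟩` -/
noncomputable def lmor (S : SummablePairing C) (X : C) : S.D X ⟶ S.D (S.D X) :=
  S.wit (S.wit (S.p0 X) (S.zero (S.D X) X)) (S.wit (S.zero (S.D X) X) (S.p1 X))

/-- `c = ⟨⟨π₀ ∘ π₀, π₀ ∘ π₁⟩, ⟨π₁ ∘ π₀, π₁ ∘ π₁⟩⟩` -/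
noncomputable def cmor (S : SummablePairing C) (X : C) : S.D (S.D X) ⟶ S.D (S.D X) :=
  S.wit (S.wit (S.p0 (S.D X) ≫ S.p0 X) (S.p1 (S.D X) ≫ S.p0 X))
        (S.wit (S.p0 (S.D X) ≫ S.p1 X) (S.p1 (S.D X) ≫ S.p1 X))

end SummablePairing

/-- summability of a finite family of morphisms (represented as a multiset),
together with its sum, defined inductively -/
inductive SummablePairing.MSummable {C : Type u} [Category.{v} C] (S : SummablePairing C) :
    ∀ {X Y : C}, Multiset (X ⟶ Y) → (X ⟶ Y) → Prop
  | nil {X Y : C} : SummablePairing.MSummable S (0 : Multiset (X ⟶ Y)) (S.zero X Y)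
  | cons {X Y : C} {m : Multiset (X ⟶ Y)} {t f : X ⟶ Y} :
      SummablePairing.MSummable S m t → S.Summable t f →
      SummablePairing.MSummable S (f ::ₘ m) (S.add t f)

/-- the data making a left summability structure a pre-differential structure:
an operator `D` on morphisms with `π₀ ∘ D f = f ∘ π₀` -/
structure DiffOp {C : Type u} [Category.{v} C] (S : SummablePairing C) where
  map : ∀ {X Y : C}, (X ⟶ Y) → (S.D X ⟶ S.D Y)
  map_p0 : ∀ {X Y : C} (f : X ⟶ Y), map f ≫ S.p0 Y = S.p0 X ≫ f

namespace DiffOp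

variable {C : Type u} [Category.{v} C] {S : SummablePairing C}

/-- the differential `∂f = π₁ ∘ D f` -/
def dd (Dm : DiffOp S) {X Y : C} (f : X ⟶ Y) : S.D X ⟶ Y := Dm.map f ≫ S.p1 Y

/-- D-linear morphisms -/
def DLinear (Dm : DiffOp S) {X Y : C} (f : X ⟶ Y) : Prop :=
  Dm.map f ≫ S.p1 Y = S.p1 X ≫ f ∧ Dm.map f ≫ S.s Y = S.s X ≫ f ∧
  (∀ U : C, S.zero U X ≫ f = S.zero U Y)

/-- axiom (Dproj-lin) -/
def DprojLin (Dm : DiffOp S) : Prop :=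
  (∀ X : C, Dm.DLinear (S.p0 X)) ∧ (∀ X : C, Dm.DLinear (S.p1 X))

/-- axiom (Dsum-lin) -/
def DsumLin (Dm : DiffOp S) : Prop :=
  (∀ X : C, Dm.DLinear (S.s X)) ∧ (∀ X Y : C, Dm.DLinear (S.zero X Y))

/-- axiom (D-chain): functoriality -/
def Dchain (Dm : DiffOp S) : Prop :=
  (∀ X : C, Dm.map (𝟙 X) = 𝟙 (S.D X)) ∧
  (∀ (X Y Z : C) (f : X ⟶ Y) (g : Y ⟶ Z), Dm.map (f ≫ g) = Dm.map f ≫ Dm.map g)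

/-- axiom (D-add): naturality of `ι₀` and `θ` -/
def Dadd (Dm : DiffOp S) : Prop :=
  (∀ (X Y : C) (f : X ⟶ Y), S.iota0 X ≫ Dm.map f = f ≫ S.iota0 Y) ∧
  (∀ (X Y : C) (f : X ⟶ Y), S.theta X ≫ Dm.map f = Dm.map (Dm.map f) ≫ S.theta Y)

/-- axiom (D-lin): naturality of `l` -/
def Dlin (Dm : DiffOp S) : Prop :=
  ∀ (X Y : C) (f : X ⟶ Y), Dm.map f ≫ S.lmor Y = S.lmor X ≫ Dm.map (Dm.map f)

/-- axiom (D-Schwarz): naturality of `c` -/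
def Dschwarz (Dm : DiffOp S) : Prop :=
  ∀ (X Y : C) (f : X ⟶ Y),
    S.cmor X ≫ Dm.map (Dm.map f) = Dm.map (Dm.map f) ≫ S.cmor Y

end DiffOp

namespace SummablePairing

variable {C : Type u} [Category.{v} C] (S : SummablePairing C)

lemma wit_spec {X Y : C} {f0 f1 : X ⟶ Y} (h : S.Summable f0 f1) :
    S.wit f0 f1 ≫ S.p0 Y = f0 ∧ S.wit f0 f1 ≫ S.p1 Y = f1 := by
  unfold wit
  rw [dif_pos h]
  exact h.choose_spec

lemma wit_eq {X Y : C} {f0 f1 : X ⟶ Y} {w : X ⟶ S.D Y}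
    (h0 : w ≫ S.p0 Y = f0) (h1 : w ≫ S.p1 Y = f1) : S.wit f0 f1 = w := by
  have hs : S.Summable f0 f1 := ⟨w, h0, h1⟩
  obtain ⟨a0, a1⟩ := S.wit_spec hs
  exact S.jointly_monic (a0.trans h0.symm) (a1.trans h1.symm)

end SummablePairing

/-- (D-com) is equivalent to commutativity of the partial sum. -/
theorem stmt2 {C : Type u} [Category.{v} C] (S : SummablePairing C)
    (hpre : S.IsLeftPreSummability) :
    S.Dcom ↔
      (∀ (X Y : C) (f0 f1 : X ⟶ Y), S.Summable f0 f1 →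
        S.Summable f1 f0 ∧ S.add f0 f1 = S.add f1 f0) := by
  constructor
  · intro hcom X Y f0 f1 hf
    obtain ⟨w, hw0, hw1⟩ := hf
    obtain ⟨hsum, hadd⟩ := hcom Y
    set u := S.wit (S.p1 Y) (S.p0 Y) with hu
    obtain ⟨hu0, hu1⟩ := S.wit_spec hsum
    have hsum' : S.Summable f1 f0 :=
      ⟨w ≫ u, by rw [Category.assoc, hu0, hw1], by rw [Category.assoc, hu1, hw0]⟩
    refine ⟨hsum', ?_⟩
    have hwit : S.wit f1 f0 = w ≫ u :=
      S.wit_eq (by rw [Category.assoc, hu0, hw1]) (by rw [Category.assoc, hu1, hw0])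
    have hwit' : S.wit f0 f1 = w := S.wit_eq hw0 hw1
    have hus : u ≫ S.s Y = S.s Y := hadd
    simp only [SummablePairing.add, hwit, hwit', Category.assoc, hus]
  · intro h X
    have hid : S.Summable (S.p0 X) (S.p1 X) :=
      ⟨𝟙 _, Category.id_comp _, Category.id_comp _⟩
    obtain ⟨hsum, hadd⟩ := h _ _ _ _ hid
    refine ⟨hsum, ?_⟩
    have hwit : S.wit (S.p0 X) (S.p1 X) = 𝟙 _ :=
      S.wit_eq (Category.id_comp _) (Category.id_comp _)
    rw [← hadd]
    simp [SummablePairing.add, hwit]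
end

section
/- In a category C equipped with a pre-differential structure, the following are equivalent: (1) ι₀ is natural with respect to D, i.e. D f ∘ ι₀ = ι₀ ∘ f for all f; (2) for any f ∈ C(X, Y), ∂f ∘ ι₀ = 0; (3) for any f ∈ C(X, Y), any object U and any x ∈ C(U, X), ∂f ∘ ⟨x, 0⟩ = 0. -/
open CategoryTheory CategoryTheory.Limits
open scoped Classical

universe v u

namespace SummablePairing

variable {C : Type u} [Category.{v} C] (S : SummablePairing C)

lemma wit_p0 {X Y : C} {f0 f1 : X ⟶ Y} (h : S.Summable f0 f1) :
    S.wit f0 f1 ≫ S.p0 Y = f0 := by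
  rw [wit, dif_pos h]; exact h.choose_spec.1

lemma wit_p1 {X Y : C} {f0 f1 : X ⟶ Y} (h : S.Summable f0 f1) :
    S.wit f0 f1 ≫ S.p1 Y = f1 := by
  rw [wit, dif_pos h]; exact h.choose_spec.2

lemma iota0_p0 (hz : S.Dzero) (X : C) : S.iota0 X ≫ S.p0 X = 𝟙 X :=
  S.wit_p0 (hz X).1

lemma iota0_p1 (hz : S.Dzero) (X : C) : S.iota0 X ≫ S.p1 X = S.zero X X :=
  S.wit_p1 (hz X).1

lemma summable_zero_right (hz : S.Dzero) {U X : C} (x : U ⟶ X) :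
    S.Summable x (S.zero U X) :=
  ⟨x ≫ S.iota0 X, by rw [Category.assoc, S.iota0_p0 hz, Category.comp_id],
    by rw [Category.assoc, S.iota0_p1 hz, S.comp_zero]⟩

lemma wit_zero_right (hz : S.Dzero) {U X : C} (x : U ⟶ X) :
    S.wit x (S.zero U X) = x ≫ S.iota0 X := by
  apply S.jointly_monic
  · rw [S.wit_p0 (S.summable_zero_right hz x), Category.assoc,
      S.iota0_p0 hz, Category.comp_id]
  · rw [S.wit_p1 (S.summable_zero_right hz x), Category.assoc,
      S.iota0_p1 hz, S.comp_zero]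

end SummablePairing

/-- equivalences for the naturality of `ι₀`. -/
theorem stmt15 {C : Type u} [Category.{v} C] (S : SummablePairing C)
    (hS : S.IsLeftSummability) (Dm : DiffOp S) :
    ((∀ (X Y : C) (f : X ⟶ Y), S.iota0 X ≫ Dm.map f = f ≫ S.iota0 Y) ↔
     (∀ (X Y : C) (f : X ⟶ Y), S.iota0 X ≫ Dm.dd f = S.zero X Y)) ∧
    ((∀ (X Y : C) (f : X ⟶ Y), S.iota0 X ≫ Dm.dd f = S.zero X Y) ↔
     (∀ (X Y U : C) (f : X ⟶ Y) (x : U ⟶ X),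
        S.wit x (S.zero U X) ≫ Dm.dd f = S.zero U Y)) := by
  obtain ⟨pre, dcom, dzero, dwit⟩ := hS
  constructor
  · constructor
    · intro h X Y f
      rw [DiffOp.dd, ← Category.assoc, h, Category.assoc, S.iota0_p1 dzero,
        S.comp_zero]
    · intro h X Y f
      apply S.jointly_monic
      · rw [Category.assoc, Dm.map_p0, ← Category.assoc, S.iota0_p0 dzero,
          Category.id_comp, Category.assoc, S.iota0_p0 dzero, Category.comp_id]
      · rw [Category.assoc, Category.assoc, S.iota0_p1 dzero, S.comp_zero]
        exact h X Y f
  · constructor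
    · intro h X Y U f x
      rw [S.wit_zero_right dzero, Category.assoc, h, S.comp_zero]
    · intro h X Y f
      have := h X Y X f (𝟙 X)
      rwa [SummablePairing.iota0]
end
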